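/- A nonnegative-valued variance criterion characterizes orthogonality: for J an n × m real matrix and v a Rademacher vector, Var[‖Jv‖²] = 0 if and only if the columns of J are pairwise orthogonal. -/
import Mathlib

/-- The sign associated to a Boolean: `true ↦ 1`, `false ↦ -1`. -/
noncomputable def sgn (b : Bool) : ℝ := if b then 1 else -1

/-- Expectation of a function of an i.i.d. Rademacher vector. -/
noncomputable def expectR (m : ℕ) (f : (Fin m → Bool) → ℝ) : ℝ :=
  (∑ s : Fin m → Bool, f s) / 2 ^ m

/-- Variance of a function of an i.i.d. Rademacher vector. -/
noncomputable def varR (m : ℕ) (f : (Fin m → Bool) → ℝ) : ℝ :=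
  expectR m (fun s => (f s - expectR m f) ^ 2)

lemma sgn_sq (b : Bool) : sgn b * sgn b = 1 := by
  cases b <;> simp [sgn]

lemma sgn_true : sgn true = 1 := by simp [sgn]

lemma varR_eq_zero_iff (m : ℕ) (f : (Fin m → Bool) → ℝ) :
    varR m f = 0 ↔ ∀ s, f s = expectR m f := by
  have h2 : ((2:ℝ) ^ m) ≠ 0 := by positivity
  rw [varR, expectR, div_eq_zero_iff]
  simp only [h2, or_false]
  rw [Finset.sum_eq_zero_iff_of_nonneg (fun s _ => sq_nonneg _)]
  constructor
  · intro h s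
    have h1 := h s (Finset.mem_univ s)
    have h3 := pow_eq_zero_iff (n := 2) (by norm_num) |>.mp h1
    linarith
  · intro h s _
    rw [h s]; ring

lemma expectR_const (m : ℕ) (c : ℝ) : expectR m (fun _ => c) = c := by
  have h2 : ((2:ℝ) ^ m) ≠ 0 := by positivity
  rw [expectR, Finset.sum_const, Finset.card_univ]
  rw [Fintype.card_fun]
  simp only [Fintype.card_fin, Fintype.card_bool, nsmul_eq_mul, Nat.cast_pow,
    Nat.cast_ofNat]
  field_simp

lemma f_eq (n m : ℕ) (J : Matrix (Fin n) (Fin m) ℝ) (s : Fin m → Bool) :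
    ∑ k, (∑ i, J k i * sgn (s i)) ^ 2
      = ∑ i, ∑ j, (∑ k, J k i * J k j) * sgn (s i) * sgn (s j) := by
  have h1 : ∀ k : Fin n, (∑ i, J k i * sgn (s i)) ^ 2
      = ∑ i, ∑ j, (J k i * J k j) * sgn (s i) * sgn (s j) := by
    intro k
    rw [sq, Finset.sum_mul_sum]
    apply Finset.sum_congr rfl; intro i _
    apply Finset.sum_congr rfl; intro j _
    ring
  simp only [h1]
  rw [Finset.sum_comm]
  apply Finset.sum_congr rfl; intro i _
  rw [Finset.sum_comm]
  apply Finset.sum_congr rfl; intro j _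
  rw [Finset.sum_mul, Finset.sum_mul]

theorem variance_zero_iff_orthogonal_columns (n m : ℕ)
    (J : Matrix (Fin n) (Fin m) ℝ) :
    varR m (fun s => ∑ k, (∑ i, J k i * sgn (s i)) ^ 2) = 0 ↔
      ∀ i j : Fin m, i ≠ j → ∑ k, J k i * J k j = 0 := by
  rw [varR_eq_zero_iff]
  constructor
  · intro h i j hij
    set a : Fin m → ℝ := fun p => if p = i then -1 else 1 with ha
    set b : Fin m → ℝ := fun p => if p = j then -1 else 1 with hb
    have hsa : ∀ p, sgn (decide (p ≠ i)) = a p := by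
      intro p; by_cases hp : p = i <;> simp [sgn, hp, ha]
    have hsb : ∀ p, sgn (decide (p ≠ j)) = b p := by
      intro p; by_cases hp : p = j <;> simp [sgn, hp, hb]
    have hsc : ∀ p, sgn (decide (p ≠ i ∧ p ≠ j)) = a p * b p := by
      intro p
      by_cases hpi : p = i
      · subst hpi; simp [sgn, hij, ha, hb]
      · by_cases hpj : p = j
        · subst hpj; simp [sgn, hpi, ha, hb]
        · simp [sgn, hpi, hpj, ha, hb]
    have h0 := h (fun _ => true)
    have hA := h (fun p => decide (p ≠ i))
    have hB := h (fun p => decide (p ≠ j))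
    have hAB := h (fun p => decide (p ≠ i ∧ p ≠ j))
    rw [f_eq] at h0 hA hB hAB
    simp only [hsa, hsb, hsc, sgn_true, mul_one] at h0 hA hB hAB
    have key : ∑ p, ∑ q, (∑ k, J k p * J k q) * ((1 - a p * a q) * (1 - b p * b q)) = 0 := by
      have expand : ∀ p q : Fin m,
          (∑ k, J k p * J k q) * ((1 - a p * a q) * (1 - b p * b q))
          = (∑ k, J k p * J k q)
            - (∑ k, J k p * J k q) * a p * a q
            - (∑ k, J k p * J k q) * b p * b q
            + (∑ k, J k p * J k q) * (a p * b p) * (a q * b q) := by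
        intro p q; ring
      simp only [expand, Finset.sum_sub_distrib, Finset.sum_add_distrib]
      linarith [h0, hA, hB, hAB]
    have supp : ∀ x ∈ (Finset.univ : Finset (Fin m × Fin m)),
        x ∉ ({(i, j), (j, i)} : Finset (Fin m × Fin m)) →
        (∑ k, J k x.1 * J k x.2) * ((1 - a x.1 * a x.2) * (1 - b x.1 * b x.2)) = 0 := by
      rintro ⟨p, q⟩ - hx
      simp only [Finset.mem_insert, Finset.mem_singleton, Prod.mk.injEq, not_or,
        not_and_or] at hx
      have hz : ((1 - a p * a q) * (1 - b p * b q)) = 0 := by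
        by_cases hpi : p = i
        · have hqj : q ≠ j := by tauto
          have h1 : b p = 1 := by simp [hb, hpi, hij]
          have h2 : b q = 1 := by simp [hb, hqj]
          rw [h1, h2]; ring
        · by_cases hqi : q = i
          · have hpj : p ≠ j := by tauto
            have h1 : b p = 1 := by simp [hb, hpj]
            have h2 : b q = 1 := by simp [hb, hqi, hij]
            rw [h1, h2]; ring
          · have h1 : a p = 1 := by simp [ha, hpi]
            have h2 : a q = 1 := by simp [ha, hqi]
            rw [h1, h2]; ring
      rw [hz, mul_zero]
    have key2 : ∑ p, ∑ q, (∑ k, J k p * J k q) * ((1 - a p * a q) * (1 - b p * b q))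
        = ∑ x ∈ ({(i, j), (j, i)} : Finset (Fin m × Fin m)),
            (∑ k, J k x.1 * J k x.2) * ((1 - a x.1 * a x.2) * (1 - b x.1 * b x.2)) := by
      rw [← Finset.sum_product']
      exact (Finset.sum_subset (Finset.subset_univ _) supp).symm
    have hpair : ((i, j) : Fin m × Fin m) ≠ (j, i) := by
      simp [Prod.ext_iff]; intro h'; exact absurd h' hij
    rw [key2, Finset.sum_pair hpair] at key
    have hai : a i = -1 := by simp [ha]
    have haj : a j = 1 := by simp [ha, Ne.symm hij]
    have hbi : b i = 1 := by simp [hb, hij]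
    have hbj : b j = -1 := by simp [hb]
    rw [hai, haj, hbi, hbj] at key
    have hCsymm : (∑ k, J k j * J k i) = ∑ k, J k i * J k j :=
      Finset.sum_congr rfl fun k _ => mul_comm _ _
    rw [hCsymm] at key
    have h8 : (8 : ℝ) * ∑ k, J k i * J k j = 0 := by linarith
    have := mul_eq_zero.mp h8
    simpa using this
  · intro h s
    have hf : ∀ t : Fin m → Bool,
        (∑ k, (∑ i, J k i * sgn (t i)) ^ 2) = ∑ i, ∑ k, J k i * J k i := by
      intro t
      rw [f_eq]
      apply Finset.sum_congr rfl; intro i _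
      rw [Finset.sum_eq_single i]
      · rw [mul_assoc, sgn_sq, mul_one]
      · intro j _ hji
        rw [h i j (Ne.symm hji)]
        ring
      · intro hi; exact absurd (Finset.mem_univ i) hi
    have hfun : (fun t : Fin m → Bool => ∑ k, (∑ i, J k i * sgn (t i)) ^ 2)
        = fun _ => ∑ i, ∑ k, J k i * J k i := funext hf
    show (∑ k, (∑ i, J k i * sgn (s i)) ^ 2) = _
    rw [hf s, hfun, expectR_const]
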